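/- For a subnormalized state ρ and an orthogonal projector Π on a finite-dimensional Hilbert space, P(ρ, ΠρΠ) ≤ √(2·tr(Π^⊥ρ) − (tr(Π^⊥ρ))²), where Π^⊥ = I − Π. -/

import Mathlib

open scoped ComplexOrder Kronecker
open Matrix Classical

noncomputable def msqrt {n : Type*} [Fintype n] [DecidableEq n] (A : Matrix n n ℂ) :
    Matrix n n ℂ :=
  if h : A.PosSemidef then
    (h.1.eigenvectorUnitary : Matrix n n ℂ) * diagonal ((↑) ∘ (Real.sqrt ·) ∘ h.1.eigenvalues) *
      (star h.1.eigenvectorUnitary : Matrix n n ℂ)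
  else 0

noncomputable def traceNorm {n : Type*} [Fintype n] [DecidableEq n] (A : Matrix n n ℂ) : ℝ :=
  (msqrt (Aᴴ * A)).trace.re

noncomputable def fid {n : Type*} [Fintype n] [DecidableEq n] (ρ σ : Matrix n n ℂ) : ℝ :=
  traceNorm (msqrt ρ * msqrt σ) + Real.sqrt ((1 - ρ.trace.re) * (1 - σ.trace.re))

noncomputable def pdist {n : Type*} [Fintype n] [DecidableEq n] (ρ σ : Matrix n n ℂ) : ℝ :=
  Real.sqrt (1 - (fid ρ σ) ^ 2)

/-- Loewner order: `A ≤ B` iff `B - A` is positive semidefinite. -/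
def loewnerLE {n : Type*} [Fintype n] (A B : Matrix n n ℂ) : Prop := (B - A).PosSemidef

/-- Max-relative entropy `D_max(ρ‖σ) = min {λ : ρ ≤ 2^λ σ}`. -/
noncomputable def Dmax {n : Type*} [Fintype n] (ρ σ : Matrix n n ℂ) : ℝ :=
  sInf {l : ℝ | loewnerLE ρ (((2 : ℝ) ^ l) • σ)}

def Subnormalized {n : Type*} [Fintype n] (ρ : Matrix n n ℂ) : Prop :=
  ρ.PosSemidef ∧ 0 < ρ.trace.re ∧ ρ.trace.re ≤ 1

def IsDensity {n : Type*} [Fintype n] (ρ : Matrix n n ℂ) : Prop :=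
  ρ.PosSemidef ∧ ρ.trace = 1

/-!
Write `σ = ΠρΠ` and `ε = tr(Π^⊥ρ)`. Since `√σ` is supported on the range of `Π`, we get
`√σ Π = √σ`, hence `(√ρ √σ)ᴴ (√ρ √σ) = √σ ρ √σ = √σ σ √σ = σ²` and `‖√ρ √σ‖₁ = tr σ = tr ρ - ε`.
With `tr σ ≤ tr ρ ≤ 1` the second term of the generalized fidelity is at least `1 - tr ρ`, so
`F(ρ, σ) ≥ 1 - ε ≥ 0` and `P(ρ, σ)² ≤ 1 - (1 - ε)² = 2ε - ε²`.
-/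

open scoped MatrixOrder

namespace Matrix.PosSemidef

variable {n : Type*} [Fintype n] {A : Matrix n n ℂ}

lemma trace_re_nonneg (hA : A.PosSemidef) : 0 ≤ A.trace.re :=
  (Complex.nonneg_iff.mp hA.trace_nonneg).1

variable [DecidableEq n]

lemma msqrt_eq_cfcSqrt (hA : A.PosSemidef) : msqrt A = CFC.sqrt A := by
  rw [msqrt, dif_pos hA, CFC.sqrt_eq_real_sqrt A hA.nonneg, cfcₙ_eq_cfc, hA.1.cfc_eq]
  simp only [IsHermitian.cfc, Unitary.conjStarAlgAut_apply]
  rfl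

lemma conjTranspose_msqrt (hA : A.PosSemidef) : (msqrt A)ᴴ = msqrt A := by
  rw [hA.msqrt_eq_cfcSqrt]
  exact (CFC.sqrt_nonneg A).posSemidef.1

lemma msqrt_mul_self (hA : A.PosSemidef) : msqrt A * msqrt A = A := by
  rw [hA.msqrt_eq_cfcSqrt]
  exact CFC.sqrt_mul_sqrt_self A hA.nonneg

lemma msqrt_sq (hA : A.PosSemidef) : msqrt (A ^ 2) = A := by
  rw [(hA.pow 2).msqrt_eq_cfcSqrt]
  exact CFC.sqrt_sq A hA.nonneg

lemma traceNorm_eq_trace_re {X : Matrix n n ℂ} (hA : A.PosSemidef) (hX : Xᴴ * X = A ^ 2) :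
    traceNorm X = A.trace.re := by
  rw [traceNorm, hX, hA.msqrt_sq]

end Matrix.PosSemidef

namespace Matrix

variable {n : Type*} [Fintype n] {P ρ : Matrix n n ℂ}

lemma PosSemidef.conj_proj (hρ : ρ.PosSemidef) (hP : Pᴴ = P) : (P * ρ * P).PosSemidef := by
  simpa only [hP] using hρ.mul_mul_conjTranspose_same P

variable [DecidableEq n]

lemma trace_re_compl_mul_nonneg (hρ : ρ.PosSemidef) (hP : Pᴴ = P) (hP2 : P * P = P) :
    0 ≤ ((1 - P) * ρ).trace.re := by
  have hQ : (1 - P)ᴴ = 1 - P := by rw [conjTranspose_sub, conjTranspose_one, hP]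
  have hQ2 : (1 - P) * (1 - P) = 1 - P := by
    rw [sub_mul, one_mul, mul_sub, mul_one, hP2, sub_self, sub_zero]
  have h := (hρ.conj_proj hQ).trace_re_nonneg
  rwa [trace_mul_cycle, hQ2] at h

lemma trace_re_conj_proj_add_trace_re_compl_mul (hP2 : P * P = P) :
    (P * ρ * P).trace.re + ((1 - P) * ρ).trace.re = ρ.trace.re := by
  rw [trace_mul_cycle, hP2, ← Complex.add_re, ← trace_add, ← add_mul, add_sub_cancel, one_mul]

lemma msqrt_conj_proj_mul_proj (hρ : ρ.PosSemidef) (hP : Pᴴ = P) (hP2 : P * P = P) :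
    msqrt (P * ρ * P) * P = msqrt (P * ρ * P) := by
  have hσ := hρ.conj_proj hP
  have hker : msqrt (P * ρ * P) * (1 - P) = 0 := by
    refine (conjTranspose_mul_self_mul_eq_zero _ _).mp ?_
    rw [hσ.conjTranspose_msqrt, hσ.msqrt_mul_self, Matrix.mul_assoc, mul_sub, hP2, mul_one,
      sub_self, Matrix.mul_zero]
  rwa [mul_sub, mul_one, sub_eq_zero, eq_comm] at hker

lemma traceNorm_msqrt_mul_msqrt_conj_proj (hρ : ρ.PosSemidef) (hP : Pᴴ = P)
    (hP2 : P * P = P) :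
    traceNorm (msqrt ρ * msqrt (P * ρ * P)) = (P * ρ * P).trace.re := by
  have hσ := hρ.conj_proj hP
  have hSP := msqrt_conj_proj_mul_proj hρ hP hP2
  have hPS : P * msqrt (P * ρ * P) = msqrt (P * ρ * P) := by
    simpa only [conjTranspose_mul, hσ.conjTranspose_msqrt, hP] using congrArg conjTranspose hSP
  refine hσ.traceNorm_eq_trace_re ?_
  set σ := P * ρ * P
  set S := msqrt σ
  have hSS : S * S = σ := hσ.msqrt_mul_self
  calc (msqrt ρ * S)ᴴ * (msqrt ρ * S) = S * (msqrt ρ * msqrt ρ) * S := by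
        rw [conjTranspose_mul, hσ.conjTranspose_msqrt, hρ.conjTranspose_msqrt]; noncomm_ring
    _ = (S * P) * ρ * (P * S) := by rw [hSP, hPS, hρ.msqrt_mul_self]
    _ = S * σ * S := by simp only [σ]; noncomm_ring
    _ = σ ^ 2 := by rw [← hSS]; noncomm_ring

lemma one_sub_trace_re_compl_mul_le_fid (hρ : ρ.PosSemidef) (hρ1 : ρ.trace.re ≤ 1)
    (hP : Pᴴ = P) (hP2 : P * P = P) :
    1 - ((1 - P) * ρ).trace.re ≤ fid ρ (P * ρ * P) := by
  have hsplit := trace_re_conj_proj_add_trace_re_compl_mul (ρ := ρ) hP2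
  have hε := trace_re_compl_mul_nonneg hρ hP hP2
  have hsqrt : 1 - ρ.trace.re ≤ √((1 - ρ.trace.re) * (1 - (P * ρ * P).trace.re)) :=
    Real.le_sqrt_of_sq_le (by nlinarith)
  rw [fid, traceNorm_msqrt_mul_msqrt_conj_proj hρ hP hP2]
  linarith

end Matrix

lemma pdist_le_of_le_fid {n : Type*} [Fintype n] [DecidableEq n] {ρ σ : Matrix n n ℂ} {c : ℝ}
    (hc : 0 ≤ c) (h : c ≤ fid ρ σ) : pdist ρ σ ≤ √(1 - c ^ 2) :=
  Real.sqrt_le_sqrt <| by nlinarith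

theorem stmt8 {n : Type*} [Fintype n] [DecidableEq n] (ρ P : Matrix n n ℂ)
    (hρ : Subnormalized ρ) (hP : Pᴴ = P) (hP2 : P * P = P) :
    pdist ρ (P * ρ * P) ≤
      Real.sqrt (2 * (((1 - P) * ρ).trace.re) - (((1 - P) * ρ).trace.re) ^ 2) := by
  obtain ⟨hpsd, -, hρ1⟩ := hρ
  have hsplit := trace_re_conj_proj_add_trace_re_compl_mul (ρ := ρ) hP2
  have hσ := (hpsd.conj_proj hP).trace_re_nonneg
  calc pdist ρ (P * ρ * P) ≤ √(1 - (1 - ((1 - P) * ρ).trace.re) ^ 2) :=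
        pdist_le_of_le_fid (by linarith) (one_sub_trace_re_compl_mul_le_fid hpsd hρ1 hP hP2)
    _ = _ := by ring_nf
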